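/- If n ≥ 1, r ≥ 1 and t ≥ 2, then η_dl(H_{n,t,r}) = ⌈(t + n + r − 1) / (n + r)⌉. -/

import Mathlib

attribute [local instance] Classical.propDecidable

/-- The d-lucky sum of a vertex `u`. -/
noncomputable def dLuckySum {V : Type*} [Fintype V] (G : SimpleGraph V) (ℓ : V → ℕ)
    (u : V) : ℕ :=
  G.degree u + ∑ v ∈ G.neighborFinset u, ℓ v

/-- A labeling is d-lucky if adjacent vertices have distinct d-lucky sums. -/
def IsDLuckyLabeling {V : Type*} [Fintype V] (G : SimpleGraph V) (ℓ : V → ℕ) : Prop :=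
  ∀ ⦃u v : V⦄, G.Adj u v → dLuckySum G ℓ u ≠ dLuckySum G ℓ v

/-- The d-lucky number: the least positive integer `k` such that `G` admits a
d-lucky labeling with labels in `{1, …, k}`. -/
noncomputable def dLuckyNumber {V : Type*} [Fintype V] (G : SimpleGraph V) : ℕ :=
  sInf {k : ℕ | 0 < k ∧ ∃ ℓ : V → ℕ, (∀ v : V, 1 ≤ ℓ v ∧ ℓ v ≤ k) ∧ IsDLuckyLabeling G ℓ}

/-- Generating relation for `H_{n,t,r}`: `Sum.inl (i, a)` is the vertex `(i,a)` of
the complete `t`-partite graph `H_{n,t}` (partite set `i`, vertex `a`), and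
`Sum.inr (i, a, c)` is the pendant vertex `p_{i,a,c}` attached to `(i,a)`. -/
def cocktailRel (n t r : ℕ) :
    (Fin t × Fin n ⊕ Fin t × Fin n × Fin r) → (Fin t × Fin n ⊕ Fin t × Fin n × Fin r) → Prop
  | Sum.inl q, Sum.inl q' => q.1 ≠ q'.1
  | Sum.inl q, Sum.inr p => p.1 = q.1 ∧ p.2.1 = q.2
  | _, _ => False

/-- The graph `H_{n,t,r} = H_{n,t} ∘ (complement of K_r)`: the complete `t`-partite
graph with parts of size `n`, with `r` pendant vertices attached to each vertex. -/
def cocktailParty (n t r : ℕ) : SimpleGraph (Fin t × Fin n ⊕ Fin t × Fin n × Fin r) :=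
  SimpleGraph.fromRel (cocktailRel n t r)

section adj
variable {n t r : ℕ}

lemma adj_inl_inl {i j : Fin t} {a b : Fin n} :
    (cocktailParty n t r).Adj (Sum.inl (i,a)) (Sum.inl (j,b)) ↔ i ≠ j := by
  simp only [cocktailParty, SimpleGraph.fromRel_adj, cocktailRel]
  constructor
  · rintro ⟨-, h | h⟩; exact h; exact Ne.symm h
  · intro h; exact ⟨by simp [Prod.ext_iff]; tauto, Or.inl h⟩

lemma adj_inl_inr {i : Fin t} {a : Fin n} {p : Fin t × Fin n × Fin r} :
    (cocktailParty n t r).Adj (Sum.inl (i,a)) (Sum.inr p) ↔ p.1 = i ∧ p.2.1 = a := by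
  simp [cocktailParty, SimpleGraph.fromRel_adj, cocktailRel]

lemma adj_inr_inl {i : Fin t} {a : Fin n} {p : Fin t × Fin n × Fin r} :
    (cocktailParty n t r).Adj (Sum.inr p) (Sum.inl (i,a)) ↔ p.1 = i ∧ p.2.1 = a := by
  rw [SimpleGraph.adj_comm]; exact adj_inl_inr

lemma adj_inr_inr {p p' : Fin t × Fin n × Fin r} :
    ¬ (cocktailParty n t r).Adj (Sum.inr p) (Sum.inr p') := by
  simp [cocktailParty, SimpleGraph.fromRel_adj, cocktailRel]

end adj

section sums
variable {n t r : ℕ}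

lemma nbr_inr (i : Fin t) (a : Fin n) (c : Fin r) :
    (cocktailParty n t r).neighborFinset (Sum.inr (i,a,c)) = {Sum.inl (i,a)} := by
  ext v
  rcases v with q | p
  · obtain ⟨j, b⟩ := q
    simp [SimpleGraph.mem_neighborFinset, adj_inr_inl, Prod.ext_iff, eq_comm]
  · simp [SimpleGraph.mem_neighborFinset, adj_inr_inr]

lemma sum_nbr_inr (f : (Fin t × Fin n ⊕ Fin t × Fin n × Fin r) → ℕ) (i : Fin t) (a : Fin n)
    (c : Fin r) :
    ∑ v ∈ (cocktailParty n t r).neighborFinset (Sum.inr (i,a,c)), f v = f (Sum.inl (i,a)) := by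
  rw [nbr_inr, Finset.sum_singleton]

lemma sum_nbr_inl (f : (Fin t × Fin n ⊕ Fin t × Fin n × Fin r) → ℕ) (i : Fin t) (a : Fin n) :
    (∑ v ∈ (cocktailParty n t r).neighborFinset (Sum.inl (i,a)), f v)
      + ∑ b : Fin n, f (Sum.inl (i,b))
    = (∑ q : Fin t × Fin n, f (Sum.inl q)) + ∑ c : Fin r, f (Sum.inr (i,a,c)) := by
  classical
  rw [SimpleGraph.neighborFinset_eq_filter, Finset.sum_filter, Fintype.sum_sum_type]
  have h1 : ∀ q : Fin t × Fin n,
      ((cocktailParty n t r).Adj (Sum.inl (i,a)) (Sum.inl q)) ↔ ¬ (q.1 = i) := by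
    rintro ⟨j, b⟩; rw [adj_inl_inl]; exact ne_comm
  have h2 : ∀ p : Fin t × Fin n × Fin r,
      ((cocktailParty n t r).Adj (Sum.inl (i,a)) (Sum.inr p)) ↔ (p.1 = i ∧ p.2.1 = a) :=
    fun p => adj_inl_inr
  simp only [h1, h2]
  have e1 : (∑ q : Fin t × Fin n, if ¬ (q.1 = i) then f (Sum.inl q) else 0)
      + ∑ b : Fin n, f (Sum.inl (i,b)) = ∑ q : Fin t × Fin n, f (Sum.inl q) := by
    have : ∑ b : Fin n, f (Sum.inl (i,b))
        = ∑ q : Fin t × Fin n, if q.1 = i then f (Sum.inl q) else 0 := by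
      rw [Fintype.sum_prod_type]
      have hpull : ∀ j : Fin t, (∑ b : Fin n, if j = i then f (Sum.inl (j,b)) else 0)
          = if j = i then ∑ b : Fin n, f (Sum.inl (j,b)) else 0 := fun j => by
        split <;> simp
      simp only [hpull, Finset.sum_ite_eq', Finset.mem_univ, if_true]
    rw [this, ← Finset.sum_add_distrib]
    apply Finset.sum_congr rfl
    intro q _
    by_cases hq : q.1 = i <;> simp [hq]
  have e2 : (∑ p : Fin t × Fin n × Fin r, if p.1 = i ∧ p.2.1 = a then f (Sum.inr p) else 0)
      = ∑ c : Fin r, f (Sum.inr (i,a,c)) := by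
    rw [Fintype.sum_prod_type]
    simp only [ite_and]
    have hpull : ∀ j : Fin t,
        (∑ w : Fin n × Fin r, if j = i then (if w.1 = a then f (Sum.inr (j,w)) else 0) else 0)
        = if j = i then ∑ w : Fin n × Fin r, (if w.1 = a then f (Sum.inr (j,w)) else 0) else 0 :=
      fun j => by split <;> simp
    simp only [hpull, Finset.sum_ite_eq', Finset.mem_univ, if_true]
    rw [Fintype.sum_prod_type]
    have hpull2 : ∀ b : Fin n, (∑ c : Fin r, if b = a then f (Sum.inr (i,b,c)) else 0)
        = if b = a then ∑ c : Fin r, f (Sum.inr (i,b,c)) else 0 := fun b => by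
      split <;> simp
    simp only [hpull2, Finset.sum_ite_eq', Finset.mem_univ, if_true]
  omega

end sums

section dl
variable {n t r : ℕ}

lemma dLuckySum_eq {V : Type*} [Fintype V] (G : SimpleGraph V) (ℓ : V → ℕ) (u : V) :
    dLuckySum G ℓ u = ∑ v ∈ G.neighborFinset u, (1 + ℓ v) := by
  classical
  rw [dLuckySum, Finset.sum_add_distrib, Finset.sum_const, SimpleGraph.degree, smul_eq_mul,
    mul_one]

lemma dL_inr (ℓ : (Fin t × Fin n ⊕ Fin t × Fin n × Fin r) → ℕ) (i : Fin t) (a : Fin n)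
    (c : Fin r) :
    dLuckySum (cocktailParty n t r) ℓ (Sum.inr (i,a,c)) = 1 + ℓ (Sum.inl (i,a)) := by
  rw [dLuckySum_eq, sum_nbr_inr (fun v => 1 + ℓ v)]

lemma dL_inl (ℓ : (Fin t × Fin n ⊕ Fin t × Fin n × Fin r) → ℕ) (i : Fin t) (a : Fin n) :
    dLuckySum (cocktailParty n t r) ℓ (Sum.inl (i,a)) + (n + ∑ b : Fin n, ℓ (Sum.inl (i,b)))
    = (t * n + ∑ q : Fin t × Fin n, ℓ (Sum.inl q)) + (r + ∑ c : Fin r, ℓ (Sum.inr (i,a,c))) := by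
  rw [dLuckySum_eq]
  have h := sum_nbr_inl (fun v => 1 + ℓ v) i a
  simp only [Finset.sum_add_distrib, Finset.sum_const, Finset.card_univ, Fintype.card_fin,
    Fintype.card_prod, smul_eq_mul, mul_one] at h
  simp only [Finset.sum_add_distrib, Finset.sum_const, smul_eq_mul, mul_one]
  omega

end dl

lemma greedy_sum (D : ℕ) : ∀ (c m : ℕ), m ≤ c * D → (∑ e : Fin c, min D (m - e.val * D)) = m := by
  intro c
  induction c with
  | zero => intro m hm; simp at hm ⊢; omega
  | succ c ih =>
    intro m hm
    rw [Fin.sum_univ_succ]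
    have hrec : (∑ e : Fin c, min D (m - (e.succ : Fin (c+1)).val * D))
        = ∑ e : Fin c, min D ((m - D) - e.val * D) := by
      apply Finset.sum_congr rfl
      intro e _
      have : (e.succ : Fin (c+1)).val * D = e.val * D + D := by
        rw [Fin.val_succ, add_mul, one_mul]
      rw [this]
      congr 1
      omega
    have hm' : m - D ≤ c * D := by
      have : (c+1) * D = c * D + D := by ring
      omega
    rw [hrec, ih (m - D) hm']
    have : (c+1) * D = c * D + D := by ring
    simp only [Fin.val_zero, Nat.zero_mul, Nat.sub_zero]
    omega

theorem dLuckyNumber_cocktailParty (n t r : ℕ) (hn : 1 ≤ n) (hr : 1 ≤ r) (ht : 2 ≤ t) :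
    dLuckyNumber (cocktailParty n t r) =
      ⌈((t : ℚ) + (n : ℚ) + (r : ℚ) - 1) / ((n : ℚ) + (r : ℚ))⌉₊ := by
  have h1q : (1:ℚ) ≤ n := by exact_mod_cast hn
  have h2q : (1:ℚ) ≤ r := by exact_mod_cast hr
  have h3q : (2:ℚ) ≤ t := by exact_mod_cast ht
  set K := ⌈((t : ℚ) + (n : ℚ) + (r : ℚ) - 1) / ((n : ℚ) + (r : ℚ))⌉₊ with hKdef
  have hd : (0:ℚ) < (n:ℚ) + r := by linarith
  have hnum : (0:ℚ) < (t:ℚ) + n + r - 1 := by linarith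
  have hK1 : 1 ≤ K := Nat.ceil_pos.mpr (div_pos hnum hd)
  have hKt : K ≤ t := by
    rw [hKdef, Nat.ceil_le, div_le_iff₀ hd]
    nlinarith [mul_nonneg (by linarith : (0:ℚ) ≤ (t:ℚ)-1) (by linarith : (0:ℚ) ≤ (n:ℚ)-1),
      mul_nonneg (by linarith : (0:ℚ) ≤ (t:ℚ)-1) (by linarith : (0:ℚ) ≤ (r:ℚ))]
  have hKB : t + n + r ≤ K * (n + r) + 1 := by
    have h := Nat.le_ceil (((t : ℚ) + n + r - 1) / ((n:ℚ) + r))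
    rw [div_le_iff₀ hd] at h
    have h2 : ((t + n + r : ℕ) : ℚ) ≤ ((K * (n+r) + 1 : ℕ) : ℚ) := by push_cast; push_cast at h; linarith
    exact_mod_cast h2
  have hKle : ∀ m : ℕ, t + n + r ≤ m * (n + r) + 1 → K ≤ m := by
    intro m hm
    rw [hKdef, Nat.ceil_le, div_le_iff₀ hd]
    have h2 : ((t + n + r : ℕ) : ℚ) ≤ ((m * (n+r) + 1 : ℕ) : ℚ) := by exact_mod_cast hm
    push_cast at h2
    linarith
  have htn : t + n ≤ t * n + 1 := by nlinarith
  set D := K - 1 with hDdef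
  have hKD : K = D + 1 := by omega
  have htD : t ≤ n * D + r * D + 1 := by
    have h : K * (n + r) = n * D + r * D + n + r := by rw [hKD]; ring
    omega
  -- the labeling for the upper bound
  set x : Fin t → ℕ := fun i => min i.val (r * D) with hx
  set y : Fin t → ℕ := fun i => i.val - x i with hy
  have hxi : ∀ i : Fin t, x i ≤ i.val := fun i => min_le_left _ _
  have hxr : ∀ i : Fin t, x i ≤ r * D := fun i => min_le_right _ _
  have hxy : ∀ i : Fin t, x i + y i = i.val := by
    intro i
    simp only [hy, hx]
    omega
  have hyn : ∀ i : Fin t, y i ≤ n * D := by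
    intro i
    have hi := i.isLt
    simp only [hy, hx]
    omega
  set ℓ : (Fin t × Fin n ⊕ Fin t × Fin n × Fin r) → ℕ :=
    Sum.elim (fun q => 1 + min D ((n * D - y q.1) - q.2.val * D))
      (fun p => 1 + min D (x p.1 - p.2.2.val * D)) with hℓ
  have hbound : ∀ v, 1 ≤ ℓ v ∧ ℓ v ≤ K := by
    rintro (q | p) <;> simp only [hℓ, Sum.elim_inl, Sum.elim_inr] <;> omega
  have hS : ∀ i : Fin t, ∑ b : Fin n, ℓ (Sum.inl (i,b)) = n + (n * D - y i) := by
    intro i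
    simp only [hℓ, Sum.elim_inl]
    rw [Finset.sum_add_distrib, Finset.sum_const, Finset.card_univ, Fintype.card_fin,
      smul_eq_mul, mul_one, greedy_sum D n _ (Nat.sub_le _ _)]
  have hP : ∀ (i : Fin t) (a : Fin n), ∑ c : Fin r, ℓ (Sum.inr (i,a,c)) = r + x i := by
    intro i a
    simp only [hℓ, Sum.elim_inr]
    rw [Finset.sum_add_distrib, Finset.sum_const, Finset.card_univ, Fintype.card_fin,
      smul_eq_mul, mul_one, greedy_sum D r _ (hxr i)]
  have hQlow : ∀ i : Fin t,
      t * n + (n * D - y i) ≤ ∑ q : Fin t × Fin n, ℓ (Sum.inl q) := by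
    intro i
    have hQval : ∑ q : Fin t × Fin n, ℓ (Sum.inl q) = ∑ j : Fin t, (n + (n * D - y j)) := by
      rw [Fintype.sum_prod_type]
      exact Finset.sum_congr rfl fun j _ => hS j
    rw [hQval, Finset.sum_add_distrib, Finset.sum_const, Finset.card_univ, Fintype.card_fin,
      smul_eq_mul]
    have h2 : (n * D - y i) ≤ ∑ j : Fin t, (n * D - y j) :=
      Finset.single_le_sum (f := fun j : Fin t => n * D - y j) (fun j _ => Nat.zero_le _)
        (Finset.mem_univ i)
    omega
  have hdL : ∀ (i : Fin t) (a : Fin n),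
      dLuckySum (cocktailParty n t r) ℓ (Sum.inl (i,a)) + (2*n + (n * D - y i))
        = t * n + (∑ q : Fin t × Fin n, ℓ (Sum.inl q)) + 2*r + x i := by
    intro i a
    have h := dL_inl ℓ i a
    rw [hS i, hP i a] at h
    omega
  have hmain_ne_pend : ∀ (i : Fin t) (a : Fin n) (j : Fin t) (b : Fin n) (c : Fin r),
      dLuckySum (cocktailParty n t r) ℓ (Sum.inl (i,a))
        ≠ dLuckySum (cocktailParty n t r) ℓ (Sum.inr (j,b,c)) := by
    intro i a j b c
    have h1 := hdL i a
    have h2 := hQlow i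
    have h3 := dL_inr ℓ j b c
    have h4 := (hbound (Sum.inl (j,b))).2
    omega
  have hlucky : IsDLuckyLabeling (cocktailParty n t r) ℓ := by
    rintro (⟨i,a⟩ | ⟨i,a,c⟩) (⟨j,b⟩ | ⟨j,b,c'⟩) hadj
    · have hij : i ≠ j := adj_inl_inl.mp hadj
      intro heq
      have h1 := hdL i a
      have h2 := hdL j b
      have h3 := hyn i
      have h4 := hyn j
      have h5 := hxy i
      have h6 := hxy j
      exact hij (Fin.val_injective (by omega))
    · exact hmain_ne_pend i a j b c'
    · exact fun heq => hmain_ne_pend j b i a c heq.symm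
    · exact absurd hadj adj_inr_inr
  have hmem : K ∈ {k : ℕ | 0 < k ∧ ∃ ℓ : (Fin t × Fin n ⊕ Fin t × Fin n × Fin r) → ℕ,
      (∀ v, 1 ≤ ℓ v ∧ ℓ v ≤ k) ∧ IsDLuckyLabeling (cocktailParty n t r) ℓ} :=
    ⟨hK1, ℓ, hbound, hlucky⟩
  rw [dLuckyNumber]
  refine le_antisymm (Nat.sInf_le hmem) (le_csInf ⟨K, hmem⟩ ?_)
  rintro m ⟨hm0, L, hLb, hLl⟩
  apply hKle
  have a0 : Fin n := ⟨0, hn⟩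
  have hPb : ∀ i : Fin t, r ≤ ∑ c : Fin r, L (Sum.inr (i, a0, c))
      ∧ (∑ c : Fin r, L (Sum.inr (i, a0, c))) ≤ r * m := by
    intro i
    constructor
    · calc r = ∑ _c : Fin r, 1 := by simp
        _ ≤ _ := Finset.sum_le_sum fun c _ => (hLb _).1
    · calc (∑ c : Fin r, L (Sum.inr (i, a0, c))) ≤ ∑ _c : Fin r, m :=
            Finset.sum_le_sum fun c _ => (hLb _).2
        _ = r * m := by simp [Finset.sum_const, mul_comm]
  have hSb : ∀ i : Fin t, n ≤ ∑ b : Fin n, L (Sum.inl (i, b))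
      ∧ (∑ b : Fin n, L (Sum.inl (i, b))) ≤ n * m := by
    intro i
    constructor
    · calc n = ∑ _b : Fin n, 1 := by simp
        _ ≤ _ := Finset.sum_le_sum fun b _ => (hLb _).1
    · calc (∑ b : Fin n, L (Sum.inl (i, b))) ≤ ∑ _b : Fin n, m :=
            Finset.sum_le_sum fun b _ => (hLb _).2
        _ = n * m := by simp [Finset.sum_const, mul_comm]
  have hcard : (Finset.univ : Finset (Fin t)).card
      ≤ (Finset.Icc ((r:ℤ) - (n*m : ℕ)) (((r*m : ℕ) : ℤ) - n)).card := by
    apply Finset.card_le_card_of_injOn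
      (fun i : Fin t => ((∑ c : Fin r, L (Sum.inr (i, a0, c)) : ℕ) : ℤ)
        - ((∑ b : Fin n, L (Sum.inl (i, b)) : ℕ) : ℤ))
    · intro i _
      have h1 := hPb i
      have h2 := hSb i
      simp only [Finset.mem_coe, Finset.mem_Icc]
      omega
    · intro i _ j _ hij
      by_contra hne
      have hadj : (cocktailParty n t r).Adj (Sum.inl (i,a0)) (Sum.inl (j,a0)) :=
        adj_inl_inl.mpr hne
      apply hLl hadj
      dsimp only at hij
      have h1 := dL_inl L i a0
      have h2 := dL_inl L j a0
      omega
  rw [Finset.card_univ, Fintype.card_fin, Int.card_Icc] at hcard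
  have hAB : m * (n + r) = n * m + r * m := by ring
  omega
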